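/- (Lemma 3.4, pointwise form) Suppose for each k the dual variable satisfies y_k = −∇g_k(w_k) for some w_k ∈ X, where g_k is differentiable with L_k-Lipschitz gradient, suppose ρ_k ≥ 4L_k for every k, and suppose f(x) := Σ_{k=1}^K g_k(x) + h(x) is bounded from below on the nonempty compact convex set X. Then for any x⁺ ∈ X and any points x_k⁺ ∈ E: L({x_k⁺}, x⁺; y) ≥ inf_{x ∈ X} f(x) − diam(X)² Σ_{k=1}^K (L_k/2), where diam(X) := sup{‖x₁ − x₂‖ : x₁, x₂ ∈ X}. In particular, along the Async-PADMM iterates the augmented Lagrangian is bounded below by this quantity. -/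

import Mathlib

open RealInnerProductSpace

/-!
Write `d = x_k⁺ - x⁺`. The descent lemma bounds `g_k(x_k⁺)` below by its linearization at `x⁺`
minus `(L_k/2)‖d‖²`. Since `y_k = -∇g_k(w_k)` with `w_k ∈ X`, the linear terms combine to
`⟪∇g_k(x⁺) - ∇g_k(w_k), d⟫ ≥ -L_k diam(X) ‖d‖`, and once `ρ_k ≥ 2L_k` the penalty
`(ρ_k/2)‖d‖²` absorbs this up to `-(L_k/2) diam(X)²`, by completing the square.
Summing over `k` and bounding `f(x⁺)` below by its infimum on `X` gives the claim.
-/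

/-- The augmented Lagrangian of the consensus problem. -/
noncomputable def augL {E : Type*} [NormedAddCommGroup E] [InnerProductSpace ℝ E]
    {K : ℕ} (g : Fin K → E → ℝ) (h : E → ℝ) (ρ : Fin K → ℝ)
    (xk : Fin K → E) (x : E) (y : Fin K → E) : ℝ :=
  (∑ k, g k (xk k)) + h x + (∑ k, ⟪y k, xk k - x⟫) + ∑ k, ρ k / 2 * ‖xk k - x‖ ^ 2

section LipschitzGradient

variable {E : Type*} [NormedAddCommGroup E] [InnerProductSpace ℝ E] [CompleteSpace E]
  {g : E → ℝ} {L : ℝ}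

theorem hasDerivAt_comp_add_smul {v d : E} {t : ℝ} (hg : DifferentiableAt ℝ g (v + t • d)) :
    HasDerivAt (fun s : ℝ => g (v + s • d)) ⟪gradient g (v + t • d), d⟫ t := by
  have hline : HasDerivAt (fun s : ℝ => v + s • d) d t := by
    simpa using ((hasDerivAt_id t).smul_const d).const_add v
  exact (hasGradientAt_iff_hasFDerivAt.mp hg.hasGradientAt).comp_hasDerivAt t hline

/-- The descent lemma. -/
theorem add_inner_gradient_sub_le_of_lipschitz_gradient (hg : Differentiable ℝ g)
    (hlip : ∀ u v : E, ‖gradient g u - gradient g v‖ ≤ L * ‖u - v‖) (u v : E) :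
    g v + ⟪gradient g v, u - v⟫ - L / 2 * ‖u - v‖ ^ 2 ≤ g u := by
  set d := u - v
  let φ : ℝ → ℝ := fun t => g (v + t • d) - t * ⟪gradient g v, d⟫ + L / 2 * t ^ 2 * ‖d‖ ^ 2
  let φ' : ℝ → ℝ := fun t =>
    ⟪gradient g (v + t • d) - gradient g v, d⟫ + L * t * ‖d‖ ^ 2
  have hφ : ∀ t, HasDerivAt φ (φ' t) t := fun t =>
    (((hasDerivAt_comp_add_smul (hg _)).sub ((hasDerivAt_id' t).mul_const _)).add
      (((hasDerivAt_pow 2 t).const_mul (L / 2)).mul_const (‖d‖ ^ 2))).congr_deriv <| by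
        simp only [φ', inner_sub_left]
        ring
  have hφ'_nonneg : ∀ t ∈ interior (Set.Ici (0 : ℝ)), 0 ≤ φ' t := by
    intro t ht
    rw [interior_Ici, Set.mem_Ioi] at ht
    have hgrad : ‖gradient g (v + t • d) - gradient g v‖ ≤ L * (t * ‖d‖) := by
      simpa [norm_smul, abs_of_pos ht] using hlip (v + t • d) v
    have hcs := (abs_le.mp ((abs_real_inner_le_norm _ d).trans
      (mul_le_mul_of_nonneg_right hgrad (norm_nonneg d)))).1
    simp only [φ']
    nlinarith
  have hmono : MonotoneOn φ (Set.Ici 0) :=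
    monotoneOn_of_hasDerivWithinAt_nonneg (convex_Ici 0)
      (fun t _ => (hφ t).continuousAt.continuousWithinAt)
      (fun t _ => (hφ t).hasDerivWithinAt) hφ'_nonneg
  have h01 : φ 0 ≤ φ 1 := hmono Set.self_mem_Ici (Set.mem_Ici.2 zero_le_one) zero_le_one
  simp only [φ, zero_smul, add_zero, one_smul, d, add_sub_cancel] at h01
  linarith

theorem sub_le_add_inner_neg_gradient_add_sq (hL : 0 ≤ L) (hg : Differentiable ℝ g)
    (hlip : ∀ u v : E, ‖gradient g u - gradient g v‖ ≤ L * ‖u - v‖)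
    {ρ D : ℝ} (hρ : 2 * L ≤ ρ) {x w : E} (hxw : ‖x - w‖ ≤ D) (z : E) :
    g x - L / 2 * D ^ 2 ≤ g z + ⟪-gradient g w, z - x⟫ + ρ / 2 * ‖z - x‖ ^ 2 := by
  have hdescent := add_inner_gradient_sub_le_of_lipschitz_gradient hg hlip z x
  have hgrad : ‖gradient g x - gradient g w‖ ≤ L * D :=
    (hlip x w).trans (mul_le_mul_of_nonneg_left hxw hL)
  have hcs := (abs_le.mp ((abs_real_inner_le_norm _ (z - x)).trans
    (mul_le_mul_of_nonneg_right hgrad (norm_nonneg _)))).1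
  rw [inner_sub_left] at hcs
  rw [inner_neg_left]
  nlinarith [mul_nonneg hL (sq_nonneg (‖z - x‖ - D)), sq_nonneg ‖z - x‖]

end LipschitzGradient

theorem augL_eq_add_sum {E : Type*} [NormedAddCommGroup E] [InnerProductSpace ℝ E]
    {K : ℕ} (g : Fin K → E → ℝ) (h : E → ℝ) (ρ : Fin K → ℝ)
    (xk : Fin K → E) (x : E) (y : Fin K → E) :
    augL g h ρ xk x y = h x + ∑ k, (g k (xk k) + ⟪y k, xk k - x⟫ + ρ k / 2 * ‖xk k - x‖ ^ 2) := by
  simp only [augL, Finset.sum_add_distrib]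
  ring

theorem stmt_10_general {E : Type*} [NormedAddCommGroup E] [InnerProductSpace ℝ E] [CompleteSpace E]
    {K : ℕ} (g : Fin K → E → ℝ) (h : E → ℝ) (L ρ : Fin K → ℝ)
    (X : Set E)
    (hL : ∀ k, 0 < L k)
    (hdiff : ∀ k, Differentiable ℝ (g k))
    (hlip : ∀ k, ∀ u v : E, ‖gradient (g k) u - gradient (g k) v‖ ≤ L k * ‖u - v‖)
    (hXcp : IsCompact X)
    (hρL : ∀ k, 4 * L k ≤ ρ k)
    (hbdd : BddBelow ((fun x => (∑ k, g k x) + h x) '' X))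
    (w : Fin K → E) (hw : ∀ k, w k ∈ X)
    (y : Fin K → E) (hy : ∀ k, y k = -gradient (g k) (w k))
    (xp : E) (hxp : xp ∈ X) (xkp : Fin K → E) :
    augL g h ρ xkp xp y
      ≥ sInf ((fun x => (∑ k, g k x) + h x) '' X)
        - Metric.diam X ^ 2 * ∑ k, L k / 2 := by
  have hblock : ∀ k, g k xp - L k / 2 * Metric.diam X ^ 2 ≤
      g k (xkp k) + ⟪y k, xkp k - xp⟫ + ρ k / 2 * ‖xkp k - xp‖ ^ 2 := fun k => by
    rw [hy k]
    refine sub_le_add_inner_neg_gradient_add_sq (hL k).le (hdiff k) (hlip k)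
      (by linarith [hρL k, hL k]) ?_ _
    rw [← dist_eq_norm]
    exact Metric.dist_le_diam_of_mem hXcp.isBounded hxp (hw k)
  have hinf : sInf ((fun x => (∑ k, g k x) + h x) '' X) ≤ (∑ k, g k xp) + h xp :=
    csInf_le hbdd ⟨xp, hxp, rfl⟩
  calc sInf ((fun x => (∑ k, g k x) + h x) '' X) - Metric.diam X ^ 2 * ∑ k, L k / 2
      ≤ h xp + ∑ k, (g k xp - L k / 2 * Metric.diam X ^ 2) := by
        rw [Finset.sum_sub_distrib, ← Finset.sum_mul]
        linarith
    _ ≤ augL g h ρ xkp xp y := by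
        rw [augL_eq_add_sum]
        gcongr with k
        exact hblock k

/-- (Lemma 3.4, pointwise form) If the dual variables satisfy `y_k = −∇g_k(w_k)`
with `w_k ∈ X`, the stepsizes satisfy `ρ_k ≥ 4L_k`, and
`f(x) = ∑_k g_k(x) + h(x)` is bounded below on the nonempty compact convex set
`X`, then for any `x⁺ ∈ X` and any `x_k⁺`:
`L({x_k⁺}, x⁺; y) ≥ inf_{x∈X} f(x) − diam(X)² ∑_k L_k/2`. -/
theorem stmt_10 {E : Type*} [NormedAddCommGroup E] [InnerProductSpace ℝ E] [CompleteSpace E]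
    {K : ℕ} (g : Fin K → E → ℝ) (h : E → ℝ) (L ρ : Fin K → ℝ)
    (X : Set E)
    (hL : ∀ k, 0 < L k) (hρ : ∀ k, 0 < ρ k)
    (hdiff : ∀ k, Differentiable ℝ (g k))
    (hlip : ∀ k, ∀ u v : E, ‖gradient (g k) u - gradient (g k) v‖ ≤ L k * ‖u - v‖)
    (hh : ConvexOn ℝ Set.univ h)
    (hXne : X.Nonempty) (hXcp : IsCompact X) (hXcv : Convex ℝ X)
    (hρL : ∀ k, 4 * L k ≤ ρ k)
    (hbdd : BddBelow ((fun x => (∑ k, g k x) + h x) '' X))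
    (w : Fin K → E) (hw : ∀ k, w k ∈ X)
    (y : Fin K → E) (hy : ∀ k, y k = -gradient (g k) (w k))
    (xp : E) (hxp : xp ∈ X) (xkp : Fin K → E) :
    augL g h ρ xkp xp y
      ≥ sInf ((fun x => (∑ k, g k x) + h x) '' X)
        - Metric.diam X ^ 2 * ∑ k, L k / 2 :=
  stmt_10_general g h L ρ X hL hdiff hlip hXcp hρL hbdd w hw y hy xp hxp xkp
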